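/- Let I, T, S ≥ 1 be integers and ε ≥ 0. Let ŵ^1, …, ŵ^S ∈ ℝ^{I×T} be samples and Ω := ∏_{i,t} [l_{it}, u_{it}] a box with l_{it} ≤ ŵ^s_{it} ≤ u_{it} for all i, t, s. Let c_t, c⁰_t ∈ ℝ, h(w) := ∑_{t=1}^T ( c_t ∑_{i=1}^I w_{it} + c⁰_t ), and g^c := ∑_{t=1}^T ( c_t (1/S) ∑_{i=1}^I ∑_{s=1}^S ŵ^s_{it} + c⁰_t ). Suppose v^1, …, v^S ∈ ℝ^{I×T} satisfy l_{it} − ŵ^s_{it} ≤ v^s_{it} ≤ u_{it} − ŵ^s_{it} for all i, t, s and (1/S) ∑_{s=1}^S ‖v^s‖₁ ≤ ε. Then the discrete probability measure P := (1/S) ∑_{s=1}^S δ_{ŵ^s + v^s} satisfies P(Ω) = 1, there exists a coupling of P and P_e with transport cost ∫ ‖x − y‖₁ dπ ≤ ε (so d_w(P, P_e) ≤ ε), and ∫ h dP = g^c + (1/S) ∑_{s=1}^S ∑_{t=1}^T c_t ∑_{i=1}^I v^s_{it}. -/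

import Mathlib

open MeasureTheory
open scoped ENNReal

/-!
The perturbed samples `ŵ^s + v^s` lie in the box, so `P` is carried by it. Pairing each
perturbed sample with its original, `π := (1/S) ∑_s δ_{(ŵ^s + v^s, ŵ^s)}` couples `P` with the
empirical distribution at cost `(1/S) ∑_s ‖v^s‖₁ ≤ ε`. Since `h` is affine, its mean under `P`
is its empirical mean `g^c` plus the mean of its linear part on the perturbations.
-/

namespace MeasureTheory

variable {ι α β : Type*} [Fintype ι] [MeasurableSpace α] [MeasurableSpace β]

noncomputable def empiricalMeasure (x : ι → α) : Measure α :=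
  (Fintype.card ι : ℝ≥0∞)⁻¹ • ∑ i, Measure.dirac (x i)

theorem empiricalMeasure_fin {n : ℕ} (x : Fin n → α) :
    empiricalMeasure x = (n : ℝ≥0∞)⁻¹ • ∑ s, Measure.dirac (x s) := by
  rw [empiricalMeasure, Fintype.card_fin]

theorem empiricalMeasure_apply_eq_one [Nonempty ι] {x : ι → α} {s : Set α}
    (hx : ∀ i, x i ∈ s) : empiricalMeasure x s = 1 := by
  simp only [empiricalMeasure, Measure.smul_apply, Measure.finsetSum_apply,
    Measure.dirac_apply_of_mem (hx _), Finset.sum_const, Finset.card_univ, nsmul_eq_mul, mul_one,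
    smul_eq_mul]
  exact ENNReal.inv_mul_cancel (by simp) (ENNReal.natCast_ne_top _)

instance [Nonempty ι] (x : ι → α) : IsProbabilityMeasure (empiricalMeasure x) :=
  ⟨empiricalMeasure_apply_eq_one fun _ => Set.mem_univ _⟩

theorem map_empiricalMeasure {f : α → β} (hf : Measurable f) (x : ι → α) :
    (empiricalMeasure x).map f = empiricalMeasure (f ∘ x) := by
  ext t ht
  simp only [empiricalMeasure, Measure.map_apply hf ht, Measure.smul_apply,
    Measure.finsetSum_apply, Measure.dirac_apply' _ ht, Measure.dirac_apply' _ (hf ht),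
    Function.comp_apply]
  rfl

theorem lintegral_empiricalMeasure [MeasurableSingletonClass α] (x : ι → α) (f : α → ℝ≥0∞) :
    ∫⁻ a, f a ∂empiricalMeasure x = (Fintype.card ι : ℝ≥0∞)⁻¹ * ∑ i, f (x i) := by
  simp only [empiricalMeasure, lintegral_smul_measure, lintegral_finsetSum_measure,
    lintegral_dirac, smul_eq_mul]

theorem integral_empiricalMeasure [MeasurableSingletonClass α] (x : ι → α) (f : α → ℝ) :
    ∫ a, f a ∂empiricalMeasure x = (Fintype.card ι : ℝ)⁻¹ * ∑ i, f (x i) := by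
  rw [empiricalMeasure, integral_smul_measure,
    integral_finsetSum_measure fun i _ => integrable_dirac enorm_lt_top]
  simp only [integral_dirac, ENNReal.toReal_inv, ENNReal.toReal_natCast, smul_eq_mul]

theorem lintegral_ofReal_empiricalMeasure [Nonempty ι] [MeasurableSingletonClass α] (x : ι → α)
    {f : α → ℝ} (hf : 0 ≤ f) :
    ∫⁻ a, ENNReal.ofReal (f a) ∂empiricalMeasure x
      = ENNReal.ofReal ((Fintype.card ι : ℝ)⁻¹ * ∑ i, f (x i)) := by
  rw [lintegral_empiricalMeasure, ENNReal.ofReal_mul (by positivity),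
    ENNReal.ofReal_sum_of_nonneg fun i _ => hf (x i), ENNReal.ofReal_inv_of_pos (by positivity),
    ENNReal.ofReal_natCast]

end MeasureTheory

section AffineCost

variable {σ ι κ : Type*} [Fintype σ] [Fintype ι] [Fintype κ] (c c0 : κ → ℝ)

theorem sum_affine_add (w v : ι → κ → ℝ) :
    ∑ t, (c t * ∑ i, (w i t + v i t) + c0 t)
      = ∑ t, (c t * ∑ i, w i t + c0 t) + ∑ t, c t * ∑ i, v i t := by
  simp only [Finset.sum_add_distrib, mul_add]
  ring

theorem inv_card_mul_sum_affine [Nonempty σ] (x : σ → ι → κ → ℝ) :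
    (Fintype.card σ : ℝ)⁻¹ * ∑ s, ∑ t, (c t * ∑ i, x s i t + c0 t)
      = ∑ t, (c t * ((Fintype.card σ : ℝ)⁻¹ * ∑ i, ∑ s, x s i t) + c0 t) := by
  rw [Finset.sum_comm, Finset.mul_sum]
  refine Finset.sum_congr rfl fun t _ => ?_
  rw [Finset.sum_add_distrib, ← Finset.mul_sum, Finset.sum_comm, Finset.sum_const,
    Finset.card_univ, nsmul_eq_mul]
  field_simp

end AffineCost

theorem stmt5_general
    (I T S : ℕ) (hS : 1 ≤ S)
    (ε : ℝ)
    (what : Fin S → Fin I → Fin T → ℝ)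
    (l u : Fin I → Fin T → ℝ)
    (c c0 : Fin T → ℝ)
    (gc : ℝ)
    (hgc : gc = ∑ t, (c t * ((1 / (S : ℝ)) * ∑ i, ∑ s, what s i t) + c0 t))
    (v : Fin S → Fin I → Fin T → ℝ)
    (hv : ∀ i t s, l i t - what s i t ≤ v s i t ∧ v s i t ≤ u i t - what s i t)
    (hvbudget : (1 / (S : ℝ)) * ∑ s, ∑ i, ∑ t, |v s i t| ≤ ε)
    (P : Measure (Fin I → Fin T → ℝ))
    (hP : P = (S : ℝ≥0∞)⁻¹ • ∑ s : Fin S, Measure.dirac (fun i t => what s i t + v s i t)) :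
    P {w | ∀ i t, l i t ≤ w i t ∧ w i t ≤ u i t} = 1 ∧
    (∃ π : Measure ((Fin I → Fin T → ℝ) × (Fin I → Fin T → ℝ)),
      IsProbabilityMeasure π ∧
      π.map Prod.fst = P ∧
      π.map Prod.snd = (S : ℝ≥0∞)⁻¹ • ∑ s : Fin S, Measure.dirac (what s) ∧
      ∫⁻ p, ENNReal.ofReal (∑ i, ∑ t, |p.1 i t - p.2 i t|) ∂π ≤ ENNReal.ofReal ε) ∧
    ∫ w, (∑ t, (c t * ∑ i, w i t + c0 t)) ∂P
      = gc + (1 / (S : ℝ)) * ∑ s, ∑ t, c t * ∑ i, v s i t := by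
  have : Nonempty (Fin S) := ⟨⟨0, hS⟩⟩
  rw [← empiricalMeasure_fin] at hP
  subst hP hgc
  refine ⟨empiricalMeasure_apply_eq_one fun s i t =>
      ⟨by linarith [(hv i t s).1], by linarith [(hv i t s).2]⟩,
    ⟨empiricalMeasure fun s => ((fun i t => what s i t + v s i t), what s), inferInstance,
      map_empiricalMeasure measurable_fst _,
      by rw [map_empiricalMeasure measurable_snd, empiricalMeasure_fin]; rfl, ?_⟩, ?_⟩
  · rw [lintegral_ofReal_empiricalMeasure _ fun _ => by positivity, Fintype.card_fin, ← one_div]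
    simpa only [add_sub_cancel_left] using ENNReal.ofReal_le_ofReal hvbudget
  · have hmean := inv_card_mul_sum_affine c c0 what
    rw [Fintype.card_fin, ← one_div] at hmean
    rw [integral_empiricalMeasure, Fintype.card_fin, ← one_div, ← hmean, ← mul_add,
      ← Finset.sum_add_distrib]
    simp only [sum_affine_add]

/-- the achievability direction of Theorem 2. Every feasible
perturbation `v^1, …, v^S` of the samples in the finite reformulation yields a
distribution `P = (1/S) ∑_s δ_{ŵ^s + v^s}` that is supported on the box `Ω`, lies in
the Wasserstein ball of radius `ε` around the empirical distribution (witnessed by a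
coupling of transport cost at most `ε`), and whose expectation of `h` equals
`g^c + (1/S) ∑_{s,t} c_t ∑_i v^s_{it}`. -/
theorem stmt5
    (I T S : ℕ) (hI : 1 ≤ I) (hT : 1 ≤ T) (hS : 1 ≤ S)
    (ε : ℝ) (hε : 0 ≤ ε)
    (what : Fin S → Fin I → Fin T → ℝ)
    (l u : Fin I → Fin T → ℝ)
    (hl : ∀ i t s, l i t ≤ what s i t) (hu : ∀ i t s, what s i t ≤ u i t)
    (c c0 : Fin T → ℝ)
    (gc : ℝ)
    (hgc : gc = ∑ t, (c t * ((1 / (S : ℝ)) * ∑ i, ∑ s, what s i t) + c0 t))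
    (v : Fin S → Fin I → Fin T → ℝ)
    (hv : ∀ i t s, l i t - what s i t ≤ v s i t ∧ v s i t ≤ u i t - what s i t)
    (hvbudget : (1 / (S : ℝ)) * ∑ s, ∑ i, ∑ t, |v s i t| ≤ ε)
    (P : Measure (Fin I → Fin T → ℝ))
    (hP : P = (S : ℝ≥0∞)⁻¹ • ∑ s : Fin S, Measure.dirac (fun i t => what s i t + v s i t)) :
    P {w | ∀ i t, l i t ≤ w i t ∧ w i t ≤ u i t} = 1 ∧
    (∃ π : Measure ((Fin I → Fin T → ℝ) × (Fin I → Fin T → ℝ)),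
      IsProbabilityMeasure π ∧
      π.map Prod.fst = P ∧
      π.map Prod.snd = (S : ℝ≥0∞)⁻¹ • ∑ s : Fin S, Measure.dirac (what s) ∧
      ∫⁻ p, ENNReal.ofReal (∑ i, ∑ t, |p.1 i t - p.2 i t|) ∂π ≤ ENNReal.ofReal ε) ∧
    ∫ w, (∑ t, (c t * ∑ i, w i t + c0 t)) ∂P
      = gc + (1 / (S : ℝ)) * ∑ s, ∑ t, c t * ∑ i, v s i t :=
  stmt5_general I T S hS ε what l u c c0 gc hgc v hv hvbudget P hP
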